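/- arXiv:1503.02298 — 3 statements merged into one kernel-verified Lean document; each statement's English description precedes it below -/
import Mathlib

section
/- A cubic graph is cyclically 5-connected if and only if it is quad-connected and contains no circuit of length four. -/
open SimpleGraph

/-- A graph has a circuit if it contains a cycle. -/
def HasCircuit {V : Type} (G : SimpleGraph V) : Prop :=
  ∃ (v : V) (w : G.Walk v v), w.IsCycle

/-- `s` is the vertex set of a quadrangle (circuit of length four) of `G`. -/
def IsQuadSet {V : Type} (G : SimpleGraph V) (s : Set V) : Prop :=
  ∃ a b c d : V, s = {a, b, c, d} ∧ a ≠ b ∧ a ≠ c ∧ a ≠ d ∧ b ≠ c ∧ b ≠ d ∧ c ≠ d ∧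
    G.Adj a b ∧ G.Adj b c ∧ G.Adj c d ∧ G.Adj d a

def HasQuadrangle {V : Type} (G : SimpleGraph V) : Prop := ∃ s, IsQuadSet G s

def AtMostOneQuadrangle {V : Type} (G : SimpleGraph V) : Prop :=
  ∀ s t, IsQuadSet G s → IsQuadSet G t → s = t

/-- The edge cut `δA`: edges with one end in `A` and the other outside. -/
def cutEdges {V : Type} (G : SimpleGraph V) (A : Set V) : Set (Sym2 V) :=
  {e | ∃ a b, a ∈ A ∧ b ∉ A ∧ G.Adj a b ∧ e = s(a, b)}

/-- `G` is `k`-connected: more than `k` vertices and removing fewer than `k`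
vertices leaves a connected graph. -/
def IsKConnected {V : Type} [Fintype V] (G : SimpleGraph V) (k : ℕ) : Prop :=
  k < Fintype.card V ∧ ∀ S : Set V, S.ncard < k → (G.induce Sᶜ).Connected

/-- Every vertex has degree three. -/
def IsCubic {V : Type} (G : SimpleGraph V) : Prop :=
  ∀ v : V, (G.neighborSet v).ncard = 3

/-- Cyclically `k`-connected cubic graph: 3-connected, at least `2k` vertices, and
every edge-cut of cardinality less than `k` has a circuit-free side. -/
def CyclicallyKConnected {V : Type} [Fintype V] (G : SimpleGraph V) (k : ℕ) : Prop :=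
  IsKConnected G 3 ∧ 2 * k ≤ Fintype.card V ∧
    ∀ A : Set V, A.Nonempty → Aᶜ.Nonempty → (cutEdges G A).ncard < k →
      ¬ HasCircuit (G.induce A) ∨ ¬ HasCircuit (G.induce Aᶜ)

/-- The induced subgraph on `A` is (exactly) a quadrangle. -/
def IsQuadrangleGraphOn {V : Type} (G : SimpleGraph V) (A : Set V) : Prop :=
  ∃ a b c d : V, A = {a, b, c, d} ∧ a ≠ b ∧ a ≠ c ∧ a ≠ d ∧ b ≠ c ∧ b ≠ d ∧ c ≠ d ∧
    G.Adj a b ∧ G.Adj b c ∧ G.Adj c d ∧ G.Adj d a ∧ ¬ G.Adj a c ∧ ¬ G.Adj b d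

/-- Quad-connected cubic graph. -/
def QuadConnected {V : Type} [Fintype V] (G : SimpleGraph V) : Prop :=
  CyclicallyKConnected G 4 ∧ 10 ≤ Fintype.card V ∧
    ((∃ s t, IsQuadSet G s ∧ IsQuadSet G t ∧ s ≠ t) → 12 ≤ Fintype.card V) ∧
    ∀ A : Set V, A.Nonempty → Aᶜ.Nonempty → (cutEdges G A).ncard ≤ 4 →
      (¬ HasCircuit (G.induce A) ∨ IsQuadrangleGraphOn G A) ∨
      (¬ HasCircuit (G.induce Aᶜ) ∨ IsQuadrangleGraphOn G Aᶜ)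

/-- `G+(u,v,x,y)`: subdivide the edges `uv` and `xy` (new vertices `Sum.inr 0`
resp. `Sum.inr 1`) and join the two new vertices by an edge. -/
def onePlus {V : Type} (G : SimpleGraph V) (u v x y : V) : SimpleGraph (V ⊕ Fin 2) :=
  SimpleGraph.fromRel (fun a b =>
    match a, b with
    | Sum.inl a, Sum.inl b => G.Adj a b ∧ s(a, b) ≠ s(u, v) ∧ s(a, b) ≠ s(x, y)
    | Sum.inl a, Sum.inr i => (i = 0 ∧ (a = u ∨ a = v)) ∨ (i = 1 ∧ (a = x ∨ a = y))
    | Sum.inr _, Sum.inl _ => False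
    | Sum.inr i, Sum.inr j => i ≠ j)

/-- The data of a 1-extension `G+(u,v,x,y)`: `uv`, `xy` are edges and
`u,v,x,y` are pairwise distinct. -/
def OneExtData {V : Type} (G : SimpleGraph V) (u v x y : V) : Prop :=
  G.Adj u v ∧ G.Adj x y ∧ u ≠ x ∧ u ≠ y ∧ v ≠ x ∧ v ≠ y

/-- A long 1-extension: moreover neither `u` nor `v` is adjacent to `x` or `y`. -/
def LongOneExtData {V : Type} (G : SimpleGraph V) (u v x y : V) : Prop :=
  OneExtData G u v x y ∧ ¬ G.Adj u x ∧ ¬ G.Adj u y ∧ ¬ G.Adj v x ∧ ¬ G.Adj v y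

/-- A short 1-extension: a 1-extension that is not long. -/
def ShortOneExtData {V : Type} (G : SimpleGraph V) (u v x y : V) : Prop :=
  OneExtData G u v x y ∧ (G.Adj u x ∨ G.Adj u y ∨ G.Adj v x ∨ G.Adj v y)

/-- A homeomorphic embedding of `G` into `H`. -/
structure HomeoEmb {V W : Type} (G : SimpleGraph V) (H : SimpleGraph W) where
  vmap : V → W
  vinj : Function.Injective vmap
  emap : ∀ ⦃a b : V⦄, G.Adj a b → H.Walk (vmap a) (vmap b)
  emap_path : ∀ ⦃a b : V⦄ (h : G.Adj a b), (emap h).IsPath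
  emap_symm : ∀ ⦃a b : V⦄ (h : G.Adj a b), (emap h.symm).reverse = emap h
  internal : ∀ ⦃a b : V⦄ (h : G.Adj a b) (w : W), w ∈ (emap h).support →
      w ∈ Set.range vmap → w = vmap a ∨ w = vmap b
  edge_disjoint : ∀ ⦃a b c d : V⦄ (h₁ : G.Adj a b) (h₂ : G.Adj c d),
      s(a, b) ≠ s(c, d) → ∀ e, e ∈ (emap h₁).edges → e ∉ (emap h₂).edges
  meet_ends : ∀ ⦃a b c d : V⦄ (h₁ : G.Adj a b) (h₂ : G.Adj c d),
      s(a, b) ≠ s(c, d) → ∀ w, w ∈ (emap h₁).support → w ∈ (emap h₂).support →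
      (w = vmap a ∨ w = vmap b) ∧ (w = vmap c ∨ w = vmap d)

/-- Subdividing the edge `uv` of `G`: the new vertex is `Sum.inr ()`. -/
def subdivideEdge {V : Type} (G : SimpleGraph V) (u v : V) : SimpleGraph (V ⊕ Unit) :=
  SimpleGraph.fromRel (fun a b =>
    match a, b with
    | Sum.inl a, Sum.inl b => G.Adj a b ∧ s(a, b) ≠ s(u, v)
    | Sum.inl a, Sum.inr _ => a = u ∨ a = v
    | _, _ => False)

/-- `S` is obtained from `G` by repeatedly subdividing edges. -/
inductive IsSubdivision {V : Type} (G : SimpleGraph V) : {W : Type} → SimpleGraph W → Prop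
  | refl : IsSubdivision G G
  | step {W : Type} {S : SimpleGraph W} {u v : W} (h : S.Adj u v)
      (hS : IsSubdivision G S) : IsSubdivision G (subdivideEdge S u v)

/-- `H` topologically contains `G`: some graph obtained from `G` by repeatedly
subdividing edges is isomorphic to a subgraph of `H`. -/
def TopContains {W V : Type} (H : SimpleGraph W) (G : SimpleGraph V) : Prop :=
  ∃ (U : Type) (S : SimpleGraph U), IsSubdivision G S ∧
    ∃ f : U → W, Function.Injective f ∧ ∀ a b : U, S.Adj a b → H.Adj (f a) (f b)

/-- The biladder on `2p` vertices; `(false, i)` is `uᵢ` and `(true, i)` is `vᵢ`. -/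
def biladder (p : ℕ) : SimpleGraph (Bool × ZMod p) :=
  SimpleGraph.fromRel (fun a b =>
    (a.1 = false ∧ b.1 = false ∧ b.2 = a.2 + 1) ∨
    (a.1 = true ∧ b.1 = true ∧ b.2 = a.2 + 2) ∨
    (a.1 = false ∧ b.1 = true ∧ a.2 = b.2))

/-! In a cubic graph a side `A` of a cut satisfies `2 e(A) + |δA| = 3 |A|`, while a forest on `A`
has fewer than `|A|` edges; so a side with `|δA| ≤ |A|` contains a circuit. A quadrangle `Q` has
`|δQ| ≤ |Q| = 4`, and on at least ten vertices its complement has at least six, so in a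
cyclically 5-connected graph both sides of `δQ` would contain circuits. Conversely, a
quad-connected graph without quadrangles has only forests as small sides. -/

namespace SimpleGraph

lemma IsAcyclic.card_edgeFinset_lt {V : Type} [Fintype V] [Nonempty V] {G : SimpleGraph V}
    [Fintype G.edgeSet] (hG : G.IsAcyclic) : G.edgeFinset.card < Fintype.card V := by
  classical
  obtain ⟨T, hGT, -, hT⟩ := connected_top.exists_isTree_le_of_le_of_isAcyclic le_top hG
  have hle := Finset.card_le_card (edgeFinset_mono hGT)
  have := hT.card_edgeFinset
  omega

lemma degree_induce_add_ncard_neighborSet_diff {V : Type} {G : SimpleGraph V} (A : Set V) (v : A)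
    [Fintype ((G.induce A).neighborSet v)] [Finite (G.neighborSet v)] :
    (G.induce A).degree v + (G.neighborSet v \ A).ncard = (G.neighborSet v).ncard := by
  have hdeg : (G.induce A).degree v = (G.neighborSet v ∩ A).ncard := by
    rw [← card_neighborSet_eq_degree, ← Nat.card_eq_fintype_card, neighborSet_induce,
      Nat.card_coe_set_eq, ← Set.ncard_image_of_injective _ Subtype.val_injective,
      Set.image_preimage_eq_inter_range, Subtype.range_coe]
  rw [hdeg, Set.ncard_inter_add_ncard_sdiff_eq_ncard (G.neighborSet v) A]

end SimpleGraph

section Cuts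

variable {V : Type} {G : SimpleGraph V}

lemma not_hasCircuit_iff_isAcyclic : ¬ HasCircuit G ↔ G.IsAcyclic := by
  simp [HasCircuit, IsAcyclic]

lemma cutEdges_compl (A : Set V) : cutEdges G Aᶜ = cutEdges G A := by
  ext e
  constructor <;> rintro ⟨a, b, ha, hb, hab, rfl⟩ <;>
    exact ⟨b, a, by simpa using hb, by simpa using ha, hab.symm, Sym2.eq_swap⟩

lemma ncard_cutEdges_eq_sum [Finite V] (A : Set V) [Fintype A] :
    (cutEdges G A).ncard = ∑ v : A, (G.neighborSet v \ A).ncard := by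
  let f : (Σ v : A, ↥(G.neighborSet v \ A)) → cutEdges G A :=
    fun x => ⟨s(x.1, x.2), x.1, x.2, x.1.2, x.2.2.2, x.2.2.1, rfl⟩
  have hf : Function.Bijective f := by
    refine ⟨?_, ?_⟩
    · rintro ⟨⟨v, hv⟩, ⟨w, hw⟩⟩ ⟨⟨v', hv'⟩, ⟨w', hw'⟩⟩ h
      have h := congrArg Subtype.val h
      simp only [f, Sym2.eq_iff] at h
      rcases h with ⟨rfl, rfl⟩ | ⟨rfl, rfl⟩
      · rfl
      · exact absurd hv hw'.2
    · rintro ⟨_, a, b, ha, hb, hab, rfl⟩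
      exact ⟨⟨⟨a, ha⟩, ⟨b, hab, hb⟩⟩, rfl⟩
  rw [← Nat.card_coe_set_eq, ← Nat.card_eq_of_bijective f hf, Nat.card_sigma]
  simp only [Nat.card_coe_set_eq]

lemma ncard_cutEdges_le_ncard [Finite V] {A : Set V}
    (hA : ∀ v ∈ A, (G.neighborSet v \ A).ncard ≤ 1) : (cutEdges G A).ncard ≤ A.ncard := by
  have := Fintype.ofFinite A
  calc (cutEdges G A).ncard = ∑ v : A, (G.neighborSet v \ A).ncard := ncard_cutEdges_eq_sum A
    _ ≤ ∑ _v : A, 1 := Finset.sum_le_sum fun v _ => hA v v.2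
    _ = A.ncard := by
      rw [Finset.sum_const, Finset.card_univ, smul_eq_mul, mul_one, ← Nat.card_eq_fintype_card,
        Nat.card_coe_set_eq]

lemma hasCircuit_induce_of_ncard_cutEdges_le [Fintype V] (hcub : IsCubic G) {A : Set V}
    (hA : A.Nonempty) (hcut : (cutEdges G A).ncard ≤ A.ncard) : HasCircuit (G.induce A) := by
  classical
  by_contra hnc
  have : Nonempty A := hA.to_subtype
  have hforest := (not_hasCircuit_iff_isAcyclic.mp hnc).card_edgeFinset_lt
  have hcardA : Fintype.card A = A.ncard := by
    rw [← Nat.card_eq_fintype_card, Nat.card_coe_set_eq]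
  have hsum : ∑ v : A, ((G.induce A).degree v + (G.neighborSet v \ A).ncard) = 3 * A.ncard := by
    simp only [degree_induce_add_ncard_neighborSet_diff]
    rw [Finset.sum_congr rfl fun (v : A) _ => hcub v, Finset.sum_const, Finset.card_univ, hcardA,
      smul_eq_mul, mul_comm]
  rw [Finset.sum_add_distrib, sum_degrees_eq_twice_card_edges, ← ncard_cutEdges_eq_sum] at hsum
  omega

end Cuts

section Quadrangles

variable {V : Type} {G : SimpleGraph V}

lemma ncard_neighborSet_diff_le_one (hcub : IsCubic G) {A : Set V} {p q r : V}
    (hq : G.Adj p q) (hr : G.Adj p r) (hqr : q ≠ r) (hqA : q ∈ A) (hrA : r ∈ A) :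
    (G.neighborSet p \ A).ncard ≤ 1 := by
  have hfin : (G.neighborSet p).Finite := Set.finite_of_ncard_ne_zero (by rw [hcub p]; norm_num)
  have hqrA : ({q, r} : Set V) ⊆ A := Set.insert_subset hqA (Set.singleton_subset_iff.mpr hrA)
  have hqrN : ({q, r} : Set V) ⊆ G.neighborSet p :=
    Set.insert_subset hq (Set.singleton_subset_iff.mpr hr)
  calc (G.neighborSet p \ A).ncard ≤ (G.neighborSet p \ {q, r}).ncard :=
        Set.ncard_le_ncard (Set.sdiff_subset_sdiff_right hqrA) hfin.sdiff
    _ = 1 := by rw [Set.ncard_sdiff hqrN, hcub p, Set.ncard_pair hqr]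

lemma IsQuadSet.nonempty {A : Set V} (hA : IsQuadSet G A) : A.Nonempty := by
  obtain ⟨a, b, c, d, rfl, -⟩ := hA
  exact Set.insert_nonempty a _

lemma IsQuadSet.ncard_le_four {A : Set V} (hA : IsQuadSet G A) : A.ncard ≤ 4 := by
  classical
  obtain ⟨a, b, c, d, rfl, -⟩ := hA
  rw [show ({a, b, c, d} : Set V) = ↑({a, b, c, d} : Finset V) by simp, Set.ncard_coe_finset]
  exact Finset.card_le_four

lemma IsQuadSet.ncard_cutEdges_le [Finite V] (hcub : IsCubic G) {A : Set V}
    (hA : IsQuadSet G A) : (cutEdges G A).ncard ≤ A.ncard := by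
  obtain ⟨a, b, c, d, rfl, -, hac, -, -, hbd, -, hab, hbc, hcd, hda⟩ := hA
  refine ncard_cutEdges_le_ncard fun v hv => ?_
  simp only [Set.mem_insert_iff, Set.mem_singleton_iff] at hv
  rcases hv with rfl | rfl | rfl | rfl
  · exact ncard_neighborSet_diff_le_one hcub hab hda.symm hbd (by simp) (by simp)
  · exact ncard_neighborSet_diff_le_one hcub hab.symm hbc hac (by simp) (by simp)
  · exact ncard_neighborSet_diff_le_one hcub hbc.symm hcd hbd (by simp) (by simp)
  · exact ncard_neighborSet_diff_le_one hcub hda hcd.symm hac (by simp) (by simp)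

lemma IsQuadrangleGraphOn.isQuadSet {A : Set V} (hA : IsQuadrangleGraphOn G A) :
    IsQuadSet G A := by
  obtain ⟨a, b, c, d, hA, h⟩ := hA
  exact ⟨a, b, c, d, hA, by tauto⟩

end Quadrangles

section CyclicConnectivity

variable {V : Type} [Fintype V] {G : SimpleGraph V}

lemma CyclicallyKConnected.mono {k l : ℕ} (hkl : k ≤ l) (hG : CyclicallyKConnected G l) :
    CyclicallyKConnected G k :=
  ⟨hG.1, by have := hG.2.1; omega, fun A hA hAc hcut => hG.2.2 A hA hAc (by omega)⟩

lemma CyclicallyKConnected.not_hasQuadrangle (hcub : IsCubic G) {k : ℕ} (hk : 5 ≤ k)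
    (hG : CyclicallyKConnected G k) : ¬ HasQuadrangle G := by
  rintro ⟨A, hA⟩
  have hcut := hA.ncard_cutEdges_le hcub
  have hA4 := hA.ncard_le_four
  have hV := hG.2.1
  have hAc : 6 ≤ Aᶜ.ncard := by
    have := Set.ncard_add_ncard_compl A
    rw [Nat.card_eq_fintype_card] at this
    omega
  rcases hG.2.2 A hA.nonempty (Set.nonempty_of_ncard_ne_zero (by omega)) (by omega) with h | h
  · exact h (hasCircuit_induce_of_ncard_cutEdges_le hcub hA.nonempty hcut)
  · refine h (hasCircuit_induce_of_ncard_cutEdges_le hcub ?_ ?_)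
    · exact Set.nonempty_of_ncard_ne_zero (by omega)
    · rw [cutEdges_compl]
      omega

end CyclicConnectivity

/-- A cubic graph is cyclically 5-connected iff it is quad-connected
and contains no circuit of length four. -/
theorem cyclically5Connected_iff_quadConnected_no_quadrangle
    {V : Type} [Fintype V] (G : SimpleGraph V) (hcub : IsCubic G) :
    CyclicallyKConnected G 5 ↔ (QuadConnected G ∧ ¬ HasQuadrangle G) := by
  constructor
  · intro hG
    have hnq := hG.not_hasQuadrangle hcub le_rfl
    refine ⟨⟨hG.mono (by norm_num), by have := hG.2.1; omega,
      fun ⟨s, _, hs, _⟩ => absurd ⟨s, hs⟩ hnq, fun A hA hAc hcut => ?_⟩, hnq⟩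
    rcases hG.2.2 A hA hAc (by omega) with h | h
    exacts [Or.inl (Or.inl h), Or.inr (Or.inl h)]
  · rintro ⟨⟨hG4, hV, -, hcuts⟩, hnq⟩
    refine ⟨hG4.1, by omega, fun A hA hAc hcut => ?_⟩
    rcases hcuts A hA hAc (by omega) with (h | h) | (h | h)
    · exact Or.inl h
    · exact absurd ⟨A, h.isQuadSet⟩ hnq
    · exact Or.inr h
    · exact absurd ⟨Aᶜ, h.isQuadSet⟩ hnq
end

section
/- Let G be a quad-connected cubic graph, let u1,u2,u3,u4,u5 in order be the vertices of a path in G, let G' = G+(u1,u2,u4,u5), and assume that either G is cyclically 5-connected or G has a quadrangle C with u1,u2 ∈ V(C) and u4,u5 ∉ V(C). Then G' is a short extension of G if and only if u1 and u5 are adjacent. -/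
open SimpleGraph

/-! A short extension `G+(u₁,u₂,u₄,u₅)` needs one of the edges `u₁u₄`, `u₁u₅`, `u₂u₄`, `u₂u₅`.
Everything rests on the count `3|A| = 2|E(A)| + |δA|` in a cubic graph together with
`|E(A)| < |A|` for a nonempty circuit-free `A`: a set spanning at least as many edges as it has
vertices has a circuit, and if it is small its cut is small as well, while the large complement
of a small cut always contains a circuit.

So `u₂u₄` (a triangle) contradicts cyclic 4-connectivity, and `u₁u₄` or `u₂u₅` (a quadrangle)
contradicts cyclic 5-connectivity. Otherwise the given quadrangle `C` through `u₁u₂` is,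
by cubicity, a second quadrangle sharing an edge with the new one; then `G` has at least 12
vertices, and the union of the two quadrangles has 5 or 6 vertices and more edges than vertices,
hence a cut of size at most 4 with circuits on both sides and no quadrangle side, contradicting
quad-connectivity. -/

lemma List.Nodup.ncard_setOf_mem {α : Type*} {l : List α} (hl : l.Nodup) :
    {x | x ∈ l}.ncard = l.length := by
  classical
  rw [← List.coe_toFinset, Set.ncard_coe_finset, List.toFinset_card_of_nodup hl]

lemma List.Nodup.length_le_ncard {α : Type*} {l : List α} {s : Set α} (hl : l.Nodup)
    (hs : s.Finite) (h : ∀ x ∈ l, x ∈ s) : l.length ≤ s.ncard :=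
  hl.ncard_setOf_mem ▸ Set.ncard_le_ncard h hs

namespace SimpleGraph

variable {V : Type} {G : SimpleGraph V}

lemma IsAcyclic.card_edgeSet_lt [Finite V] [Nonempty V] (hG : G.IsAcyclic) :
    Nat.card G.edgeSet < Nat.card V := by
  have := Fintype.ofFinite V
  classical
  obtain ⟨T, hGT, -, hT⟩ := connected_top.exists_isTree_le_of_le_of_isAcyclic le_top hG
  calc Nat.card G.edgeSet ≤ Nat.card T.edgeSet :=
        Nat.card_mono (Set.toFinite _) (edgeSet_mono hGT)
    _ < Nat.card V := by
        have := hT.card_edgeFinset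
        rw [Nat.card_eq_fintype_card, Nat.card_eq_fintype_card, ← edgeFinset_card]
        omega

end SimpleGraph

def edgesIn {V : Type} (G : SimpleGraph V) (A : Set V) : Set (Sym2 V) := G.edgeSet ∩ A.sym2

section Counting

variable {V : Type} {G : SimpleGraph V}

lemma image_val_edgeSet_induce (A : Set V) :
    Sym2.map (↑) '' (G.induce A).edgeSet = edgesIn G A := by
  ext ⟨x, y⟩
  constructor
  · rintro ⟨e, he, hxy⟩
    induction e using Sym2.ind with
    | _ a b =>
      simp only [Sym2.map_mk, Sym2.eq_iff] at hxy
      rcases hxy with ⟨rfl, rfl⟩ | ⟨rfl, rfl⟩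
      · exact ⟨he, a.2, b.2⟩
      · exact ⟨G.adj_symm he, b.2, a.2⟩
  · rintro ⟨he, hx, hy⟩
    exact ⟨s(⟨x, hx⟩, ⟨y, hy⟩), he, rfl⟩

lemma ncard_edgesIn_lt_of_not_hasCircuit [Finite V] {A : Set V} (hA : A.Nonempty)
    (h : ¬ HasCircuit (G.induce A)) : (edgesIn G A).ncard < A.ncard := by
  have : Nonempty A := hA.to_subtype
  have hac : (G.induce A).IsAcyclic := fun v c hc => h ⟨v, c, hc⟩
  rw [← image_val_edgeSet_induce, Set.ncard_image_of_injective _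
    (Sym2.map.injective Subtype.val_injective), ← Nat.card_coe_set_eq, ← Nat.card_coe_set_eq]
  exact hac.card_edgeSet_lt

lemma hasCircuit_of_ncard_le_ncard_edgesIn [Finite V] {A : Set V} (hA : A.Nonempty)
    (h : A.ncard ≤ (edgesIn G A).ncard) : HasCircuit (G.induce A) := by
  by_contra hc
  exact (ncard_edgesIn_lt_of_not_hasCircuit hA hc).not_ge h

lemma IsCubic.degree_eq (hG : IsCubic G) (v : V) [Fintype (G.neighborSet v)] :
    G.degree v = 3 := by
  rw [← card_neighborSet_eq_degree, ← Nat.card_eq_fintype_card, Nat.card_coe_set_eq, hG v]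

open Finset in
lemma IsCubic.ncard_dart_fst_mem [Fintype V] (hG : IsCubic G) (A : Set V) :
    {d : G.Dart | d.fst ∈ A}.ncard = 3 * A.ncard := by
  classical
  rw [Set.ncard_eq_toFinset_card', Set.toFinset_ofPred,
    card_eq_sum_card_fiberwise (f := fun d : G.Dart => d.fst) (t := A.toFinset)
      fun d hd => by simpa using hd,
    Set.ncard_eq_toFinset_card', mul_comm, ← smul_eq_mul, ← sum_const]
  refine sum_congr rfl fun v hv => ?_
  rw [← hG.degree_eq v, ← dart_fst_fiber_card_eq_degree]
  congr 1
  ext d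
  simp only [mem_filter, mem_univ, true_and, and_iff_right_iff_imp]
  rintro rfl
  simpa using hv

open Finset in
lemma ncard_dart_mem_mem [Fintype V] (A : Set V) :
    {d : G.Dart | d.fst ∈ A ∧ d.snd ∈ A}.ncard = 2 * (edgesIn G A).ncard := by
  classical
  rw [Set.ncard_eq_toFinset_card', Set.toFinset_ofPred,
    card_eq_sum_card_fiberwise (f := Dart.edge) (t := (edgesIn G A).toFinset)
      fun d hd => Set.mem_toFinset.mpr
        ⟨d.edge_mem, (by simpa using hd : s(d.fst, d.snd) ∈ A.sym2)⟩,
    Set.ncard_eq_toFinset_card', mul_comm, ← smul_eq_mul, ← sum_const]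
  refine sum_congr rfl fun e he => ?_
  rw [Set.mem_toFinset] at he
  rw [← dart_edge_fiber_card G e he.1]
  congr 1
  ext d
  simp only [mem_filter, mem_univ, true_and, and_iff_right_iff_imp]
  rintro rfl
  exact he.2

lemma ncard_dart_mem_not_mem [Finite V] (A : Set V) :
    {d : G.Dart | d.fst ∈ A ∧ d.snd ∉ A}.ncard = (cutEdges G A).ncard := by
  have himage : cutEdges G A = Dart.edge '' {d : G.Dart | d.fst ∈ A ∧ d.snd ∉ A} := by
    ext e
    constructor
    · rintro ⟨a, b, ha, hb, hab, rfl⟩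
      exact ⟨⟨(a, b), hab⟩, ⟨ha, hb⟩, rfl⟩
    · rintro ⟨d, ⟨ha, hb⟩, rfl⟩
      exact ⟨d.fst, d.snd, ha, hb, d.adj, rfl⟩
  rw [himage, Set.InjOn.ncard_image]
  rintro d ⟨-, hd⟩ d' ⟨hd', -⟩ h
  rcases (dart_edge_eq_iff d d').mp h with h | rfl
  · exact h
  · exact absurd hd' hd

lemma IsCubic.three_mul_ncard_eq [Fintype V] (hG : IsCubic G) (A : Set V) :
    3 * A.ncard = 2 * (edgesIn G A).ncard + (cutEdges G A).ncard := by
  classical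
  rw [← hG.ncard_dart_fst_mem, ← ncard_dart_mem_mem, ← ncard_dart_mem_not_mem,
    ← Set.ncard_union_eq]
  · congr 1
    ext d
    simp only [Set.mem_ofPred_eq, Set.mem_union]
    tauto
  · exact Set.disjoint_left.mpr fun d hd hd' => hd'.2 hd.2

end Counting

section Cubic

variable {V : Type} {G : SimpleGraph V}

lemma IsCubic.ncard_add_two_le_ncard_cutEdges [Fintype V] (hG : IsCubic G) {A : Set V}
    (hA : A.Nonempty) (h : ¬ HasCircuit (G.induce A)) : A.ncard + 2 ≤ (cutEdges G A).ncard := by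
  have := hG.three_mul_ncard_eq A
  have := ncard_edgesIn_lt_of_not_hasCircuit hA h
  omega

lemma IsCubic.hasCircuit_compl [Fintype V] (hG : IsCubic G) {A : Set V} (hA : Aᶜ.Nonempty)
    (h : (cutEdges G A).ncard < Aᶜ.ncard + 2) : HasCircuit (G.induce Aᶜ) := by
  by_contra hc
  have := hG.ncard_add_two_le_ncard_cutEdges hA hc
  rw [cutEdges_compl] at this
  omega

lemma IsCubic.exists_neighborSet_eq (hG : IsCubic G) {v x y : V} (hx : G.Adj v x)
    (hy : G.Adj v y) (hxy : x ≠ y) : ∃ z, G.neighborSet v = {x, y, z} := by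
  have hsub : ({x, y} : Set V) ⊆ G.neighborSet v := Set.pair_subset hx hy
  obtain ⟨z, hz⟩ : ∃ z, G.neighborSet v \ {x, y} = {z} := Set.ncard_eq_one.mp <| by
    rw [Set.ncard_sdiff hsub, hG v, Set.ncard_pair hxy]
  refine ⟨z, ?_⟩
  rw [← Set.union_sdiff_cancel hsub, hz, Set.insert_union, Set.singleton_union]

lemma IsCubic.neighborSet_eq (hG : IsCubic G) {v x y z : V} (hx : G.Adj v x) (hy : G.Adj v y)
    (hz : G.Adj v z) (hxy : x ≠ y) (hxz : x ≠ z) (hyz : y ≠ z) :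
    G.neighborSet v = {x, y, z} := by
  refine (Set.eq_of_subset_of_ncard_le ?_ ?_ (Set.finite_of_ncard_ne_zero (by simp [hG v]))).symm
  · simp [Set.insert_subset_iff, hx, hy, hz]
  · rw [hG v, Set.ncard_eq_three.mpr ⟨x, y, z, hxy, hxz, hyz, rfl⟩]

end Cubic

structure IsQuadCycle {V : Type} (G : SimpleGraph V) (a b c d : V) : Prop where
  nodup : [a, b, c, d].Nodup
  adj_ab : G.Adj a b
  adj_bc : G.Adj b c
  adj_cd : G.Adj c d
  adj_da : G.Adj d a

section Quadrangles

variable {V : Type} {G : SimpleGraph V} {a b c d : V}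

namespace IsQuadCycle

lemma rotate (h : IsQuadCycle G a b c d) : IsQuadCycle G b c d a :=
  ⟨(List.nodup_rotate (n := 1)).mpr h.nodup, h.adj_bc, h.adj_cd, h.adj_da, h.adj_ab⟩

lemma reverse (h : IsQuadCycle G a b c d) : IsQuadCycle G a d c b where
  nodup := by
    have := h.nodup
    simp only [List.nodup_cons, List.mem_cons, List.not_mem_nil] at this ⊢
    grind
  adj_ab := h.adj_da.symm
  adj_bc := h.adj_cd.symm
  adj_cd := h.adj_bc.symm
  adj_da := h.adj_ab.symm

lemma isQuadSet (h : IsQuadCycle G a b c d) : IsQuadSet G {a, b, c, d} := by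
  have := h.nodup
  simp only [List.nodup_cons, List.mem_cons, List.not_mem_nil] at this
  exact ⟨a, b, c, d, rfl, by grind, by grind, by grind, by grind, by grind, by grind,
    h.adj_ab, h.adj_bc, h.adj_cd, h.adj_da⟩

end IsQuadCycle

lemma IsQuadSet.exists_isQuadCycle {C : Set V} (hC : IsQuadSet G C) {v : V} (hv : v ∈ C) :
    ∃ p q r, C = {v, p, q, r} ∧ IsQuadCycle G v p q r := by
  obtain ⟨a, b, c, d, rfl, hab, hac, had, hbc, hbd, hcd, h1, h2, h3, h4⟩ := hC
  have hQ : IsQuadCycle G a b c d := ⟨by simp [*], h1, h2, h3, h4⟩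
  simp only [Set.mem_insert_iff, Set.mem_singleton_iff] at hv
  rcases hv with rfl | rfl | rfl | rfl
  · exact ⟨b, c, d, rfl, hQ⟩
  · exact ⟨c, d, a, by ext; simp; tauto, hQ.rotate⟩
  · exact ⟨d, a, b, by ext; simp; tauto, hQ.rotate.rotate⟩
  · exact ⟨a, b, c, by ext; simp; tauto, hQ.rotate.rotate.rotate⟩

lemma IsQuadSet.exists_isQuadCycle_of_neighborSet_eq {C : Set V} (hC : IsQuadSet G C)
    {v x y z : V} (hv : v ∈ C) (hN : G.neighborSet v = {x, y, z}) (hz : z ∉ C) :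
    ∃ q, C = {v, x, q, y} ∧ IsQuadCycle G v x q y := by
  obtain ⟨p, q, r, rfl, hQ⟩ := hC.exists_isQuadCycle hv
  have hxy : ∀ w ∈ ({v, p, q, r} : Set V), G.Adj v w → w = x ∨ w = y := by
    intro w hw hvw
    have : w ∈ G.neighborSet v := hvw
    rw [hN] at this
    rcases this with h | h | h
    · exact Or.inl h
    · exact Or.inr h
    · exact absurd (h ▸ hw) hz
  have hpr : p ≠ r := by
    have := hQ.nodup
    simp only [List.nodup_cons, List.mem_cons, List.not_mem_nil] at this
    grind
  rcases hxy p (by simp) hQ.adj_ab with rfl | rfl <;>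
    rcases hxy r (by simp) hQ.adj_da.symm with rfl | rfl
  · exact absurd rfl hpr
  · exact ⟨q, rfl, hQ⟩
  · exact ⟨q, by ext; simp; tauto, hQ.reverse⟩
  · exact absurd rfl hpr

end Quadrangles

section CyclicConnectivity

variable {V : Type} [Fintype V] {G : SimpleGraph V} {k : ℕ}

lemma CyclicallyKConnected.le_ncard (hG : CyclicallyKConnected G k) (hcub : IsCubic G)
    {A : Set V} (hA : A.Nonempty) (hdense : A.ncard ≤ (edgesIn G A).ncard) : k ≤ A.ncard := by
  by_contra! hlt
  have hsum := Set.ncard_add_ncard_compl A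
  rw [Nat.card_eq_fintype_card] at hsum
  have := hG.2.1
  -- `|δA| ≤ |A| < k`, and both `A` and `Aᶜ` contain circuits
  have := hcub.three_mul_ncard_eq A
  have hAc : Aᶜ.Nonempty := Set.nonempty_of_ncard_ne_zero (by omega)
  rcases hG.2.2 A hA hAc (by omega) with h | h
  · exact h (hasCircuit_of_ncard_le_ncard_edgesIn hA hdense)
  · exact h (hcub.hasCircuit_compl hAc (by omega))

lemma CyclicallyKConnected.le_length (hG : CyclicallyKConnected G k) (hcub : IsCubic G)
    {vs : List V} {es : List (Sym2 V)} (hvs : vs.Nodup) (hne : vs ≠ []) (hes : es.Nodup)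
    (hlen : vs.length ≤ es.length) (hsub : ∀ e ∈ es, e ∈ edgesIn G {x | x ∈ vs}) :
    k ≤ vs.length := by
  rw [← hvs.ncard_setOf_mem]
  refine hG.le_ncard hcub ⟨vs.head hne, List.head_mem hne⟩ ?_
  rw [hvs.ncard_setOf_mem]
  exact hlen.trans (hes.length_le_ncard (Set.toFinite _) hsub)

lemma CyclicallyKConnected.not_adj_of_adj_of_adj (hG : CyclicallyKConnected G k)
    (hcub : IsCubic G) (hk : 4 ≤ k) {a b c : V} (hab : G.Adj a b) (hbc : G.Adj b c)
    (hac : a ≠ c) : ¬ G.Adj a c := by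
  intro hca
  have := hG.le_length hcub (vs := [a, b, c]) (es := [s(a, b), s(b, c), s(c, a)])
    (by simp [hab.ne, hbc.ne, hac]) (by simp)
    (by simp [hab.ne, hbc.ne, hac, hab.ne.symm, hac.symm]) le_rfl
    (by simp [edgesIn, hab, hbc, hca.symm])
  simp at this
  omega

lemma CyclicallyKConnected.not_isQuadCycle (hG : CyclicallyKConnected G k) (hcub : IsCubic G)
    (hk : 5 ≤ k) {a b c d : V} : ¬ IsQuadCycle G a b c d := by
  intro hQ
  have hnd := hQ.nodup
  simp only [List.nodup_cons, List.mem_cons, List.not_mem_nil] at hnd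
  have := hG.le_length hcub (vs := [a, b, c, d]) (es := [s(a, b), s(b, c), s(c, d), s(d, a)])
    hQ.nodup (by simp) (by simp; grind) le_rfl
    (by simp [edgesIn, hQ.adj_ab, hQ.adj_bc, hQ.adj_cd, hQ.adj_da])
  simp at this
  omega

end CyclicConnectivity

section QuadConnectivity

variable {V : Type} [Fintype V] {G : SimpleGraph V} {a b c d : V}

omit [Fintype V] in
lemma IsQuadrangleGraphOn.ncard_eq_four {A : Set V} (h : IsQuadrangleGraphOn G A) :
    A.ncard = 4 := by
  obtain ⟨a, b, c, d, rfl, hab, hac, had, hbc, hbd, hcd, -⟩ := h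
  exact Set.ncard_eq_four.mpr ⟨a, b, c, d, hab, hac, had, hbc, hbd, hcd, rfl⟩

lemma QuadConnected.ncard_edgesIn_le (hG : QuadConnected G) (hcub : IsCubic G)
    (hV : 12 ≤ Fintype.card V) {A : Set V} (h5 : 5 ≤ A.ncard) (h6 : A.ncard ≤ 6) :
    (edgesIn G A).ncard ≤ A.ncard := by
  by_contra! hdense
  have hsum := Set.ncard_add_ncard_compl A
  rw [Nat.card_eq_fintype_card] at hsum
  have := hcub.three_mul_ncard_eq A
  have hA : A.Nonempty := Set.nonempty_of_ncard_ne_zero (by omega)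
  have hAc : Aᶜ.Nonempty := Set.nonempty_of_ncard_ne_zero (by omega)
  rcases hG.2.2.2 A hA hAc (by omega) with (h | h) | (h | h)
  · exact h (hasCircuit_of_ncard_le_ncard_edgesIn hA hdense.le)
  · have := h.ncard_eq_four
    omega
  · exact h (hcub.hasCircuit_compl hAc (by omega))
  · have := h.ncard_eq_four
    omega

lemma QuadConnected.length_le (hG : QuadConnected G) (hcub : IsCubic G)
    (hV : 12 ≤ Fintype.card V) {vs : List V} {es : List (Sym2 V)} (hvs : vs.Nodup)
    (h5 : 5 ≤ vs.length) (h6 : vs.length ≤ 6) (hes : es.Nodup)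
    (hsub : ∀ e ∈ es, e ∈ edgesIn G {x | x ∈ vs}) : es.length ≤ vs.length := by
  rw [← hvs.ncard_setOf_mem] at h5 h6 ⊢
  exact (hes.length_le_ncard (Set.toFinite _) hsub).trans (hG.ncard_edgesIn_le hcub hV h5 h6)

lemma QuadConnected.mem_of_isQuadCycle_of_isQuadSet (hG : QuadConnected G) (hcub : IsCubic G)
    (hQ : IsQuadCycle G a b c d) {C : Set V} (hC : IsQuadSet G C) (ha : a ∈ C) (hb : b ∈ C) :
    d ∈ C := by
  by_contra hd
  have hV : 12 ≤ Fintype.card V := hG.2.2.1 ⟨C, _, hC, hQ.isQuadSet, fun h => hd (h ▸ by simp)⟩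
  have hnd := hQ.nodup
  simp only [List.nodup_cons, List.mem_cons, List.not_mem_nil] at hnd
  obtain ⟨t, hN⟩ := hcub.exists_neighborSet_eq hQ.adj_ab hQ.adj_da.symm (by grind)
  rw [Set.pair_comm] at hN
  obtain ⟨q, rfl, hC'⟩ := hC.exists_isQuadCycle_of_neighborSet_eq ha hN hd
  have hnd' := hC'.nodup
  simp only [List.nodup_cons, List.mem_cons, List.not_mem_nil] at hnd'
  simp only [Set.mem_insert_iff, Set.mem_singleton_iff, not_or] at hd
  -- `abcd ∪ abqt` has one edge more than it has vertices, whether `q = c`, `t = c` or neither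
  by_cases hqc : q = c
  · subst hqc
    have := hG.length_le hcub hV (vs := [a, b, q, d, t])
      (es := [s(a, b), s(b, q), s(q, d), s(d, a), s(q, t), s(t, a)])
      (by simp; grind) (by simp) (by simp) (by simp; grind)
      (by simp [edgesIn, hQ.adj_ab, hQ.adj_bc, hQ.adj_cd, hQ.adj_da, hC'.adj_cd, hC'.adj_da])
    simp at this
  by_cases htc : t = c
  · subst htc
    have := hG.length_le hcub hV (vs := [a, b, t, d, q])
      (es := [s(a, b), s(b, t), s(t, d), s(d, a), s(b, q), s(q, t)])
      (by simp; grind) (by simp) (by simp) (by simp; grind)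
      (by simp [edgesIn, hQ.adj_ab, hQ.adj_bc, hQ.adj_cd, hQ.adj_da, hC'.adj_bc, hC'.adj_cd])
    simp at this
  have := hG.length_le hcub hV (vs := [a, b, c, d, q, t])
    (es := [s(a, b), s(b, c), s(c, d), s(d, a), s(b, q), s(q, t), s(t, a)])
    (by simp; grind) (by simp) (by simp) (by simp; grind)
    (by simp [edgesIn, hQ.adj_ab, hQ.adj_bc, hQ.adj_cd, hQ.adj_da, hC'.adj_bc, hC'.adj_cd,
      hC'.adj_da])
  simp at this

end QuadConnectivity

/-- for a path u1u2u3u4u5, the extension G+(u1,u2,u4,u5) is short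
iff u1 and u5 are adjacent. -/
theorem shortExtension_iff_adjacent
    {V : Type} [Fintype V] (G : SimpleGraph V) (hcub : IsCubic G)
    (hqc : QuadConnected G) (u₁ u₂ u₃ u₄ u₅ : V)
    (hpath : ([u₁, u₂, u₃, u₄, u₅] : List V).Pairwise (· ≠ ·))
    (h12 : G.Adj u₁ u₂) (h23 : G.Adj u₂ u₃) (h34 : G.Adj u₃ u₄) (h45 : G.Adj u₄ u₅)
    (hside : CyclicallyKConnected G 5 ∨
      ∃ C : Set V, IsQuadSet G C ∧ u₁ ∈ C ∧ u₂ ∈ C ∧ u₄ ∉ C ∧ u₅ ∉ C) :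
    ShortOneExtData G u₁ u₂ u₄ u₅ ↔ G.Adj u₁ u₅ := by
  have hnd : [u₁, u₂, u₃, u₄, u₅].Nodup := hpath
  obtain ⟨⟨-, n13, n14, n15⟩, ⟨-, n24, n25⟩, ⟨-, n35⟩, -⟩ :
      (u₁ ≠ u₂ ∧ u₁ ≠ u₃ ∧ u₁ ≠ u₄ ∧ u₁ ≠ u₅) ∧ (u₂ ≠ u₃ ∧ u₂ ≠ u₄ ∧ u₂ ≠ u₅) ∧
        (u₃ ≠ u₄ ∧ u₃ ≠ u₅) ∧ u₄ ≠ u₅ := by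
    simpa [List.nodup_cons, not_or] using hnd
  refine ⟨fun ⟨_, h⟩ => ?_, fun h15 => ⟨⟨h12, h45, n14, n15, n24, n25⟩, Or.inr (Or.inl h15)⟩⟩
  rcases h with h14 | h15 | h24 | h25
  · have hQ : IsQuadCycle G u₁ u₂ u₃ u₄ :=
      ⟨hnd.sublist (List.sublist_append_left _ [u₅]), h12, h23, h34, h14.symm⟩
    rcases hside with hcyc | ⟨C, hC, h1, h2, h4, -⟩
    · exact absurd hQ (hcyc.not_isQuadCycle hcub le_rfl)
    · exact absurd (hqc.mem_of_isQuadCycle_of_isQuadSet hcub hQ hC h1 h2) h4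
  · exact h15
  · exact absurd h24 (hqc.1.not_adj_of_adj_of_adj hcub le_rfl h23 h34 n24)
  · have hQ : IsQuadCycle G u₂ u₃ u₄ u₅ := ⟨hnd.of_cons, h23, h34, h45, h25.symm⟩
    rcases hside with hcyc | ⟨C, hC, -, h2, -, h5⟩
    · exact absurd hQ (hcyc.not_isQuadCycle hcub le_rfl)
    · obtain ⟨q, rfl, -⟩ := hC.exists_isQuadCycle_of_neighborSet_eq h2
        (hcub.neighborSet_eq h12.symm h23 h25 n13 n15 n35) h5
      exact absurd (hqc.mem_of_isQuadCycle_of_isQuadSet hcub hQ hC (by simp) (by simp)) h5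
end

section
/- For every odd integer p ≥ 5, the biladder on 2p vertices topologically contains the Petersen graph. -/
open SimpleGraph

/-!
The Petersen graph `biladder 5` is mapped identically onto `u₀, …, u₄, v₀, …, v₄` in
`biladder p`. Every edge goes to an edge except the three that wrap around modulo 5,
namely `u₄u₀`, `v₄v₁` and `v₃v₀`. These are realised by the paths `u₄u₅⋯u_{p-1}u₀`,
`v₄v₆⋯v_{p-1}v₁` and `v₃v₅⋯v_{p-2}v₀`, which are internally disjoint because `p` is odd:
the two `v`-paths run through indices of opposite parity.

A wrap-around edge `yw` is carried along as an extra edge of the host graph and realised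
one vertex at a time. If `z` is an unused neighbour of `w`, subdivide the edge of the
subdivision that is mapped onto `yw` and send the new vertex to `z`. This replaces the
extra edge `yw` by `yz`.
-/

section Subdivision

variable {V W : Type}

lemma subdivideEdge_adj_inl_inl (G : SimpleGraph V) (u v a b : V) :
    (subdivideEdge G u v).Adj (.inl a) (.inl b) ↔ G.Adj a b ∧ s(a, b) ≠ s(u, v) := by
  rw [subdivideEdge, fromRel_adj]
  constructor
  · rintro ⟨-, h | ⟨hba, hne⟩⟩
    · exact h
    · exact ⟨hba.symm, by rwa [Sym2.eq_swap]⟩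
  · intro h
    exact ⟨by simpa using h.1.ne, Or.inl h⟩

lemma subdivideEdge_adj_inl_inr (G : SimpleGraph V) (u v a : V) (t : Unit) :
    (subdivideEdge G u v).Adj (.inl a) (.inr t) ↔ a = u ∨ a = v := by
  simp [subdivideEdge]

lemma subdivideEdge_not_adj_inr_inr (G : SimpleGraph V) (u v : V) (s t : Unit) :
    ¬ (subdivideEdge G u v).Adj (.inr s) (.inr t) := by
  simp [subdivideEdge]

def TopContainsWithin (H : SimpleGraph W) (G : SimpleGraph V) (R : Set W) : Prop :=
  ∃ (U : Type) (S : SimpleGraph U), IsSubdivision G S ∧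
    ∃ f : U → W, Function.Injective f ∧ Set.range f ⊆ R ∧
      ∀ a b : U, S.Adj a b → H.Adj (f a) (f b)

namespace TopContainsWithin

variable {G : SimpleGraph V} {H K : SimpleGraph W} {R R' : Set W}

lemma topContains (h : TopContainsWithin H G R) : TopContains H G :=
  let ⟨U, S, hS, f, hf, _, hadj⟩ := h
  ⟨U, S, hS, f, hf, hadj⟩

lemma mono (h : TopContainsWithin H G R) (hHK : H ≤ K) (hRR' : R ⊆ R') :
    TopContainsWithin K G R' :=
  let ⟨U, S, hS, f, hf, hR, hadj⟩ := h
  ⟨U, S, hS, f, hf, hR.trans hRR', fun a b hab => hHK (hadj a b hab)⟩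

lemma reroute {y z w : W} (h : TopContainsWithin (K ⊔ edge y w) G R) (hz : z ∉ R)
    (hzw : K.Adj z w) : TopContainsWithin (K ⊔ edge y z) G (insert z R) := by
  obtain ⟨U, S, hS, f, hf, hR, hadj⟩ := h
  by_cases hyw : ∃ a b, S.Adj a b ∧ f a = y ∧ f b = w
  · obtain ⟨a, b, hab, rfl, rfl⟩ := hyw
    have hza : z ≠ f a := fun h => hz (h ▸ hR ⟨a, rfl⟩)
    refine ⟨U ⊕ Unit, _, hS.step hab, Sum.elim f fun _ => z, ?_, ?_, ?_⟩
    · rintro (c | ⟨⟩) (d | ⟨⟩) hcd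
      · exact congrArg Sum.inl (hf hcd)
      · exact absurd (hR ⟨c, hcd⟩) hz
      · exact absurd (hR ⟨d, hcd.symm⟩) hz
      · rfl
    · rintro _ ⟨c | ⟨⟩, rfl⟩
      exacts [Set.mem_insert_of_mem _ (hR ⟨c, rfl⟩), Set.mem_insert _ _]
    · have to_new : ∀ c, (subdivideEdge S a b).Adj (.inl c) (.inr ()) →
          (K ⊔ edge (f a) z).Adj (f c) z := by
        intro c hc
        rcases (subdivideEdge_adj_inl_inr _ _ _ _ _).mp hc with rfl | rfl
        · exact Or.inr ((edge_adj _ _ _ _).mpr ⟨Or.inl ⟨rfl, rfl⟩, hza.symm⟩)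
        · exact Or.inl hzw.symm
      rintro (c | ⟨⟩) (d | ⟨⟩) hcd
      · obtain ⟨hcd, hne⟩ := (subdivideEdge_adj_inl_inl _ _ _ _ _).mp hcd
        refine Or.inl ((hadj c d hcd).resolve_right fun he => hne ?_)
        rcases ((edge_adj _ _ _ _).mp he).1 with ⟨hc, hd⟩ | ⟨hc, hd⟩
        · rw [hf hc, hf hd]
        · rw [hf hc, hf hd, Sym2.eq_swap]
      · exact to_new c hcd
      · exact (to_new d hcd.symm).symm
      · exact absurd hcd (subdivideEdge_not_adj_inr_inr _ _ _ _ _)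
  · refine ⟨U, S, hS, f, hf, hR.trans (Set.subset_insert _ _), fun a b hab => ?_⟩
    refine Or.inl ((hadj a b hab).resolve_right fun he => ?_)
    rcases ((edge_adj _ _ _ _).mp he).1 with ⟨ha, hb⟩ | ⟨ha, hb⟩
    · exact hyw ⟨a, b, hab, ha, hb⟩
    · exact hyw ⟨b, a, hab.symm, hb, ha⟩

lemma of_path {g : ℕ → W} {n : ℕ} (h : TopContainsWithin (K ⊔ edge (g 0) (g (n + 1))) G R)
    (hadj : ∀ k ≤ n, K.Adj (g k) (g (k + 1))) (hinj : Set.InjOn g (Set.Icc 1 n))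
    (hR : ∀ k ∈ Set.Icc 1 n, g k ∉ R) :
    TopContainsWithin K G (R ∪ g '' Set.Icc 1 n) := by
  induction n generalizing R with
  | zero =>
    have hle : edge (g 0) (g 1) ≤ K := (edge_le_iff K).mpr (Or.inr (hadj 0 le_rfl))
    exact h.mono (sup_le le_rfl hle) Set.subset_union_left
  | succ n ih =>
    have hlast : n + 1 ∈ Set.Icc 1 (n + 1) := ⟨by omega, le_rfl⟩
    have hsub : Set.Icc 1 n ⊆ Set.Icc 1 (n + 1) := Set.Icc_subset_Icc le_rfl (by omega)
    have h' := ih (h.reroute (hR _ hlast) (hadj _ le_rfl)) (fun k hk => hadj k (by omega))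
      (hinj.mono hsub) fun k hk hkR => ?_
    · refine h'.mono le_rfl ?_
      rintro x ((rfl | hx) | ⟨k, hk, rfl⟩)
      exacts [Or.inr ⟨_, hlast, rfl⟩, Or.inl hx, Or.inr ⟨k, hsub hk, rfl⟩]
    · rcases hkR with hk' | hk'
      · exact absurd (hinj (hsub hk) hlast hk') (by have := hk.2; omega)
      · exact hR k (hsub hk) hk'

end TopContainsWithin

end Subdivision

section Biladder

variable {p : ℕ}

lemma biladder_adj_rung (x : ZMod p) : (biladder p).Adj (false, x) (true, x) := by
  rw [biladder, fromRel_adj]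
  exact ⟨by simp, Or.inl (Or.inr (Or.inr ⟨rfl, rfl, rfl⟩))⟩

lemma biladder_adj_add_one (hp : 1 < p) (x : ZMod p) :
    (biladder p).Adj (false, x) (false, x + 1) := by
  have h1 : (1 : ZMod p) ≠ 0 := by
    have : Fact (1 < p) := ⟨hp⟩
    exact one_ne_zero
  rw [biladder, fromRel_adj]
  exact ⟨by simpa using h1, Or.inl (Or.inl ⟨rfl, rfl, rfl⟩)⟩

lemma biladder_adj_add_two (hp : 2 < p) (x : ZMod p) :
    (biladder p).Adj (true, x) (true, x + 2) := by
  have h2 : (2 : ZMod p) ≠ 0 := fun h => absurd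
    (Nat.le_of_dvd two_pos ((ZMod.natCast_eq_zero_iff 2 p).mp (by exact_mod_cast h))) (by omega)
  rw [biladder, fromRel_adj]
  exact ⟨by simpa using h2, Or.inl (Or.inr (Or.inl ⟨rfl, rfl, rfl⟩))⟩

lemma natCast_injOn_Iio : Set.InjOn (Nat.cast : ℕ → ZMod p) (Set.Iio p) :=
  fun a ha b hb hab => by
    simpa [ZMod.val_natCast_of_lt ha, ZMod.val_natCast_of_lt hb] using congrArg ZMod.val hab

lemma natCast_val_injective {n : ℕ} [NeZero n] (hnp : n ≤ p) :
    Function.Injective (fun i : ZMod n => (i.val : ZMod p)) := fun i j h =>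
  ZMod.val_injective n (natCast_injOn_Iio (i.val_lt.trans_le hnp) (j.val_lt.trans_le hnp) h)

lemma biladder_five_adj_map (hp : 5 ≤ p) {a b : Bool × ZMod 5} (hab : (biladder 5).Adj a b) :
    (biladder p ⊔ edge (true, 3) (true, 0) ⊔ edge (true, 4) (true, 1) ⊔
      edge (false, 4) (false, 0)).Adj (Prod.map id (fun i : ZMod 5 => (i.val : ZMod p)) a)
      (Prod.map id (fun i : ZMod 5 => (i.val : ZMod p)) b) := by
  set f := Prod.map id (fun i : ZMod 5 => (i.val : ZMod p))
  have hf : Function.Injective f := Function.injective_id.prodMap (natCast_val_injective hp)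
  have hf_eq {c : Bool} {i : ZMod 5} (n : ℕ) (hi : i.val = n) :
      f (c, i) = (c, (n : ZMod p)) := by
    rw [← hi]
    rfl
  have hrel : ∀ a b, a ≠ b → (a.1 = false ∧ b.1 = false ∧ b.2 = a.2 + 1) ∨
      (a.1 = true ∧ b.1 = true ∧ b.2 = a.2 + 2) ∨ (a.1 = false ∧ b.1 = true ∧ a.2 = b.2) →
      (biladder p ⊔ edge (true, 3) (true, 0) ⊔ edge (true, 4) (true, 1) ⊔
        edge (false, 4) (false, 0)).Adj (f a) (f b) := by
    rintro ⟨c, i⟩ ⟨d, j⟩ hne (⟨rfl, rfl, rfl⟩ | ⟨rfl, rfl, rfl⟩ | ⟨rfl, rfl, rfl⟩)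
    · rcases (by decide : ∀ i : ZMod 5, i = 4 ∨ (i + 1).val = i.val + 1) i with rfl | h
      · refine Or.inr ((edge_adj _ _ _ _).mpr ⟨Or.inl ⟨(hf_eq 4 (by decide)).trans ?_,
          (hf_eq 0 (by decide)).trans ?_⟩, hf.ne hne⟩) <;> simp
      · refine Or.inl (Or.inl (Or.inl ?_))
        show (biladder p).Adj (false, (i.val : ZMod p)) (false, ((i + 1).val : ZMod p))
        rw [h, Nat.cast_succ]
        exact biladder_adj_add_one (by omega) _
    · rcases (by decide : ∀ i : ZMod 5, i = 3 ∨ i = 4 ∨ (i + 2).val = i.val + 2) i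
        with rfl | rfl | h
      · refine Or.inl (Or.inl (Or.inr ((edge_adj _ _ _ _).mpr
          ⟨Or.inl ⟨(hf_eq 3 (by decide)).trans ?_, (hf_eq 0 (by decide)).trans ?_⟩,
            hf.ne hne⟩))) <;> simp
      · refine Or.inl (Or.inr ((edge_adj _ _ _ _).mpr ⟨Or.inl ⟨(hf_eq 4 (by decide)).trans ?_,
          (hf_eq 1 (by decide)).trans ?_⟩, hf.ne hne⟩)) <;> simp
      · refine Or.inl (Or.inl (Or.inl ?_))
        show (biladder p).Adj (true, (i.val : ZMod p)) (true, ((i + 2).val : ZMod p))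
        rw [h, Nat.cast_add, Nat.cast_two]
        exact biladder_adj_add_two (by omega) _
    · exact Or.inl (Or.inl (Or.inl (biladder_adj_rung _)))
  rw [biladder, fromRel_adj] at hab
  rcases hab with ⟨hne, hab | hba⟩
  exacts [hrel a b hne hab, (hrel b a hne.symm hba).symm]

lemma petersen_topContainsWithin (hp : 5 ≤ p) :
    TopContainsWithin (biladder p ⊔ edge (true, 3) (true, 0) ⊔ edge (true, 4) (true, 1) ⊔
      edge (false, 4) (false, 0)) (biladder 5) {x | x.2.val < 5} := by
  refine ⟨_, _, .refl, _, Function.injective_id.prodMap (natCast_val_injective hp), ?_,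
    fun _ _ => biladder_five_adj_map hp⟩
  rintro _ ⟨⟨c, i⟩, rfl⟩
  exact (ZMod.val_natCast_of_lt (i.val_lt.trans_le hp)).trans_lt i.val_lt

lemma TopContainsWithin.of_biladder_run {V : Type} {G : SimpleGraph V}
    {K : SimpleGraph (Bool × ZMod p)} {R R' : Set (Bool × ZMod p)} {b : Bool} {a d n : ℕ}
    {y w : ZMod p} (hK : biladder p ≤ K)
    (hstep : ∀ x : ZMod p, (biladder p).Adj (b, x) (b, x + d)) (hd : 0 < d)
    (hlt : a + d * n < p) (hy : (a : ZMod p) = y) (hw : ((a + d * (n + 1) : ℕ) : ZMod p) = w)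
    (h : TopContainsWithin (K ⊔ edge (b, y) (b, w)) G R)
    (hR : ∀ k ∈ Set.Icc 1 n, (b, ((a + d * k : ℕ) : ZMod p)) ∉ R) (hRR' : R ⊆ R')
    (hrun : ∀ k ∈ Set.Icc 1 n, (b, ((a + d * k : ℕ) : ZMod p)) ∈ R') :
    TopContainsWithin K G R' := by
  set g : ℕ → Bool × ZMod p := fun k => (b, ((a + d * k : ℕ) : ZMod p))
  have hg0 : g 0 = (b, y) := by simp [g, ← hy]
  have hgn : g (n + 1) = (b, w) := by rw [← hw]
  rw [← hg0, ← hgn] at h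
  have hg_lt {k : ℕ} (hk : k ∈ Set.Icc 1 n) : a + d * k < p :=
    lt_of_le_of_lt (by have := Nat.mul_le_mul_left d hk.2; omega) hlt
  refine (h.of_path (fun k _ => hK ?_) (fun k hk l hl hkl => ?_) hR).mono le_rfl ?_
  · show (biladder p).Adj (b, ((a + d * k : ℕ) : ZMod p)) (b, ((a + d * (k + 1) : ℕ) : ZMod p))
    rw [show a + d * (k + 1) = a + d * k + d by ring, Nat.cast_add (a + d * k)]
    exact hstep _
  · have := natCast_injOn_Iio (hg_lt hk) (hg_lt hl) (Prod.ext_iff.mp hkl).2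
    exact Nat.eq_of_mul_eq_mul_left hd (by omega)
  · rintro x (hx | ⟨k, hk, rfl⟩)
    exacts [hRR' hx, hrun k hk]

lemma TopContainsWithin.topContains_biladder {V : Type} {G : SimpleGraph V} {m : ℕ}
    (h : TopContainsWithin (biladder (2 * m + 5) ⊔ edge (true, 3) (true, 0) ⊔
      edge (true, 4) (true, 1) ⊔ edge (false, 4) (false, 0)) G {x | x.2.val < 5}) :
    TopContains (biladder (2 * m + 5)) G := by
  have hval {k : ℕ} (hk : k < 2 * m + 5) : (k : ZMod (2 * m + 5)).val = k :=
    ZMod.val_natCast_of_lt hk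
  have hu : ∀ x : ZMod (2 * m + 5), (biladder _).Adj (false, x) (false, x + (1 : ℕ)) := by
    simpa using biladder_adj_add_one (by omega)
  have hv : ∀ x : ZMod (2 * m + 5), (biladder _).Adj (true, x) (true, x + (2 : ℕ)) := by
    simpa using biladder_adj_add_two (by omega)
  have h₁ := h.of_biladder_run (R' := {x | x.2.val < 5 ∨ x.1 = false}) (a := 4) (n := 2 * m)
    (le_sup_left.trans le_sup_left) hu one_pos (by omega) (by simp)
    (by rw [show 4 + 1 * (2 * m + 1) = 2 * m + 5 by ring, ZMod.natCast_self])
    (fun k ⟨_, _⟩ => by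
      simp only [Set.mem_ofPred_eq, hval (show 4 + 1 * k < 2 * m + 5 by omega)]
      omega)
    (fun x hx => Or.inl hx) (fun k _ => Or.inr rfl)
  have h₂ := h₁.of_biladder_run (R' := {x | x.2.val < 5 ∨ x.1 = false ∨ Even x.2.val})
    (a := 4) (n := m) le_sup_left hv two_pos (by omega) (by simp)
    (by rw [show 4 + 2 * (m + 1) = 2 * m + 5 + 1 by ring, Nat.cast_add, ZMod.natCast_self,
      zero_add, Nat.cast_one])
    (fun k ⟨_, _⟩ => by
      simp only [Set.mem_ofPred_eq, hval (show 4 + 2 * k < 2 * m + 5 by omega),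
        Bool.true_eq_false, or_false]
      omega)
    (fun x hx => hx.imp_right Or.inl) (fun k ⟨_, _⟩ => by
      simp only [Set.mem_ofPred_eq, hval (show 4 + 2 * k < 2 * m + 5 by omega), Nat.even_iff]
      omega)
  have h₃ := h₂.of_biladder_run (R' := Set.univ) (a := 3) (n := m) le_rfl hv two_pos (by omega)
    (by simp) (by rw [show 3 + 2 * (m + 1) = 2 * m + 5 by ring, ZMod.natCast_self])
    (fun k ⟨_, _⟩ => by
      simp only [Set.mem_ofPred_eq, hval (show 3 + 2 * k < 2 * m + 5 by omega), Nat.even_iff,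
        Bool.true_eq_false, false_or]
      omega)
    (Set.subset_univ _) (fun _ _ => trivial)
  exact h₃.topContains

end Biladder

/-- for odd p ≥ 5, the biladder on 2p vertices topologically contains
the Petersen graph (the biladder on 10 vertices). -/
theorem biladder_topContains_petersen (p : ℕ) (hp : 5 ≤ p) (hodd : Odd p) :
    TopContains (biladder p) (biladder 5) := by
  obtain ⟨m, rfl⟩ : ∃ m, p = 2 * m + 5 := by
    obtain ⟨k, rfl⟩ := hodd
    exact ⟨k - 2, by omega⟩
  exact (petersen_topContainsWithin hp).topContains_biladder
end
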